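/- Let P be a real polynomial in m variables of degree at most n in each variable, let λ > 0, let k ∈ ℤ₊^m, and let x ∈ ℝ^m with |x_j| > λ for all j. Then |D^k P(x)| ≤ λ^{−(k₁+⋯+k_m)} · ∏_{j=1}^m |T_n^{(k_j)}(x_j/λ)| · max_{y∈[−λ,λ]^m} |P(y)|. -/

import Mathlib

/-!
For one variable this is the extremal property of Chebyshev polynomials: if `|p| ≤ M` on `[-1, 1]`
and `deg p ≤ n`, then `|p⁽ᵏ⁾(t)| ≤ T_n⁽ᵏ⁾(t) M` for `t ≥ 1`. The substitution `X ↦ aX` with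
`|a| = λ` moves this to `[-λ, λ]` and to both sides of it, the sign of `a` being absorbed by the
parity of `T_n`. The variables are then differentiated one at a time: the `j`-th partial
derivatives of `Q` at `x` are the derivatives of the slice `t ↦ Q(x[j ↦ t])`, which by induction
is bounded on `|t| ≤ λ` by the factors of the variables already treated times `max |P|`.
-/

open Polynomial

/-- Iterated partial derivative `D^k = ∂^{k 0}_{x 0} ⋯ ∂^{k (m-1)}_{x (m-1)}` of a
multivariate polynomial. -/
noncomputable def mderiv {m : ℕ} (k : Fin m → ℕ) (P : MvPolynomial (Fin m) ℝ) :
    MvPolynomial (Fin m) ℝ :=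
  (List.ofFn (fun j : Fin m => (fun Q => MvPolynomial.pderiv j Q)^[k j])).foldr
    (· ∘ ·) id P

namespace Polynomial

theorem iterate_derivative_comp_C_mul_X {R : Type*} [CommSemiring R] (p : R[X]) (a : R)
    (k : ℕ) :
    derivative^[k] (p.comp (C a * X)) = C (a ^ k) * (derivative^[k] p).comp (C a * X) := by
  induction k generalizing p with
  | zero => simp
  | succ k ih =>
    rw [Function.iterate_succ_apply, derivative_comp, derivative_C_mul_X,
      iterate_derivative_C_mul, ih, ← Function.iterate_succ_apply, ← mul_assoc, ← C_mul,
      pow_succ']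

namespace Chebyshev

theorem abs_eval_neg_iterate_derivative_T_real (n : ℤ) (k : ℕ) (x : ℝ) :
    |(derivative^[k] (T ℝ n)).eval (-x)| = |(derivative^[k] (T ℝ n)).eval x| := by
  have T_comp_neg_X :
      (T ℝ n).comp (Polynomial.C (-1) * X) = Polynomial.C (n.negOnePow : ℝ) * T ℝ n :=
    Polynomial.funext fun y => by simp [T_eval_neg]
  have := congrArg (fun q => |(derivative^[k] q).eval x|) T_comp_neg_X
  simp only [iterate_derivative_comp_C_mul_X, iterate_derivative_C_mul, eval_mul, eval_C,
    eval_comp, eval_X, abs_mul] at this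
  simpa [abs_mul] using this

theorem abs_eval_iterate_derivative_le_of_forall_abs_le {n k : ℕ} {p : ℝ[X]}
    (hp : p.degree ≤ n) {M : ℝ} (hpM : ∀ x ∈ Set.Icc (-1) 1, |p.eval x| ≤ M) {x : ℝ}
    (hx : 1 ≤ x) :
    |(derivative^[k] p).eval x| ≤ (derivative^[k] (T ℝ n)).eval x * M := by
  rcases (abs_nonneg _).trans (hpM 0 (by norm_num)) |>.eq_or_lt with hM | hM
  · have hp0 : p = 0 := eq_zero_of_infinite_isRoot p <| (Set.Icc_infinite (by norm_num :
      (-1 : ℝ) < 1)).mono fun y hy => abs_nonpos_iff.mp (hM ▸ hpM y hy)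
    simp [hp0, ← hM]
  have signed_bound (ε : ℝ) (hε : |ε| = 1) :
      ε * (derivative^[k] p).eval x ≤ (derivative^[k] (T ℝ n)).eval x * M := by
    have := eval_iterate_derivative_le_of_forall_abs_le_one (k := k) hx
      ((degree_smul_le (ε * M⁻¹) p).trans hp) fun y hy => by
        simpa [abs_mul, hε, abs_of_pos hM, inv_mul_le_one₀ hM] using hpM y hy
    rwa [iterate_derivative_smul, eval_smul, smul_eq_mul, mul_right_comm, ← div_eq_mul_inv,
      div_le_iff₀ hM] at this
  exact abs_le.mpr
    ⟨by linarith [signed_bound (-1) (by simp)], by simpa using signed_bound 1 (by simp)⟩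

theorem abs_eval_iterate_derivative_le_of_forall_abs_le_of_le_abs {n k : ℕ} {p : ℝ[X]}
    (hp : p.natDegree ≤ n) {lam M : ℝ} (hlam : 0 < lam)
    (hpM : ∀ s, |s| ≤ lam → |p.eval s| ≤ M) {t : ℝ} (ht : lam ≤ |t|) :
    |(derivative^[k] p).eval t| ≤
      (lam ^ k)⁻¹ * |(derivative^[k] (T ℝ n)).eval (t / lam)| * M := by
  obtain ⟨a, ha, hta, hT⟩ : ∃ a, |a| = lam ∧ 1 ≤ t / a ∧
      |(derivative^[k] (T ℝ n)).eval (t / a)| = |(derivative^[k] (T ℝ n)).eval (t / lam)| := by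
    rcases le_abs.mp ht with h | h
    · exact ⟨lam, abs_of_pos hlam, (one_le_div hlam).mpr h, rfl⟩
    · refine ⟨-lam, by simp [hlam.le], by rwa [div_neg, ← neg_div, one_le_div hlam], ?_⟩
      rw [div_neg, abs_eval_neg_iterate_derivative_T_real]
  have ha0 : a ≠ 0 := by rintro rfl; simp [hlam.ne] at ha
  set q := p.comp (Polynomial.C a * X)
  have hq_deg : q.degree ≤ n := by
    rw [← natDegree_le_iff_degree_le, natDegree_comp, natDegree_C_mul_X a ha0, mul_one]
    exact hp
  have hq_bound (y : ℝ) (hy : y ∈ Set.Icc (-1) 1) : |q.eval y| ≤ M := by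
    simp only [q, eval_comp, eval_mul, eval_C, eval_X]
    refine hpM _ ?_
    simpa [abs_mul, ha] using mul_le_of_le_one_right hlam.le (abs_le.mpr hy)
  have hq_deriv : (derivative^[k] q).eval (t / a) = a ^ k * (derivative^[k] p).eval t := by
    simp [q, iterate_derivative_comp_C_mul_X, mul_div_cancel₀ t ha0]
  have hM : 0 ≤ M := (abs_nonneg _).trans (hpM 0 (by simp [hlam.le]))
  calc |(derivative^[k] p).eval t| = (lam ^ k)⁻¹ * |(derivative^[k] q).eval (t / a)| := by
        rw [hq_deriv, abs_mul, abs_pow, ha, inv_mul_cancel_left₀ (pow_ne_zero k hlam.ne')]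
    _ ≤ (lam ^ k)⁻¹ * ((derivative^[k] (T ℝ n)).eval (t / a) * M) := by
        gcongr
        exact abs_eval_iterate_derivative_le_of_forall_abs_le hq_deg hq_bound hta
    _ ≤ (lam ^ k)⁻¹ * |(derivative^[k] (T ℝ n)).eval (t / lam)| * M := by
        rw [mul_assoc, ← hT]
        gcongr
        exact le_abs_self _

end Chebyshev

end Polynomial

namespace MvPolynomial

variable {σ R : Type*} [CommSemiring R]

theorem degreeOf_pderiv_le (i j : σ) (P : MvPolynomial σ R) :
    (pderiv j P).degreeOf i ≤ P.degreeOf i := by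
  rw [degreeOf_eq_sup]
  refine Finset.sup_le fun m hm => ?_
  have hcoeff : coeff (m + Finsupp.single j 1) P ≠ 0 := by
    rw [mem_support_iff, coeff_pderiv] at hm
    exact left_ne_zero_of_mul hm
  exact (Nat.le_add_right _ _).trans (monomial_le_degreeOf i (mem_support_iff.mpr hcoeff))

theorem degreeOf_iterate_pderiv_le (i j : σ) (c : ℕ) (P : MvPolynomial σ R) :
    ((pderiv j)^[c] P).degreeOf i ≤ P.degreeOf i := by
  induction c generalizing P with
  | zero => rfl
  | succ c ih => exact (ih _).trans (degreeOf_pderiv_le i j P)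

variable [DecidableEq σ]

noncomputable def slice (j : σ) (x : σ → R) (P : MvPolynomial σ R) : R[X] :=
  aeval (Function.update (fun i => Polynomial.C (x i)) j Polynomial.X) P

theorem eval_slice (j : σ) (x : σ → R) (P : MvPolynomial σ R) (t : R) :
    (slice j x P).eval t = eval (Function.update x j t) P := by
  induction P using MvPolynomial.induction_on with
  | C a => simp [slice]
  | add p q hp hq => simp_all [slice]
  | mul_X p i hp =>
    simp_all [slice, Function.apply_update (fun _ (q : R[X]) => q.eval t)]

theorem slice_pderiv (j : σ) (x : σ → R) (P : MvPolynomial σ R) :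
    slice j x (pderiv j P) = derivative (slice j x P) := by
  induction P using MvPolynomial.induction_on with
  | C a => simp [slice]
  | add p q hp hq => simp_all [slice]
  | mul_X p i hp =>
    rcases eq_or_ne i j with rfl | hij <;> simp_all [slice] <;> ring

theorem eval_iterate_pderiv (j : σ) (x : σ → R) (c : ℕ) (P : MvPolynomial σ R) :
    eval x ((pderiv j)^[c] P) = (derivative^[c] (slice j x P)).eval (x j) := by
  have slice_iterate : slice j x ((pderiv j)^[c] P) = derivative^[c] (slice j x P) := by
    induction c generalizing P with
    | zero => rfl
    | succ c ih => rw [Function.iterate_succ_apply, Function.iterate_succ_apply, ih, slice_pderiv]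
  rw [← slice_iterate, eval_slice, Function.update_eq_self]

theorem natDegree_slice_le (j : σ) (x : σ → R) (P : MvPolynomial σ R) :
    (slice j x P).natDegree ≤ P.degreeOf j := by
  conv_lhs => rw [P.as_sum, slice, map_sum]
  refine natDegree_sum_le_of_forall_le _ _ fun d hd => ?_
  rw [aeval_monomial]
  refine natDegree_C_mul_le _ _ |>.trans <| (natDegree_prod_le _ _).trans ?_
  calc _ ≤ ∑ i ∈ d.support, if j = i then d i else 0 := by
        refine Finset.sum_le_sum fun i _ => ?_
        rcases eq_or_ne j i with rfl | hij
        · simpa using natDegree_X_pow_le (R := R) (d j)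
        · simp only [Function.update_of_ne hij.symm, ← Polynomial.C_pow, natDegree_C, if_neg hij,
            le_refl]
    _ ≤ d j := by rw [Finset.sum_ite_eq]; split_ifs <;> simp
    _ ≤ P.degreeOf j := monomial_le_degreeOf j hd

end MvPolynomial

section MixedDerivative

variable {σ R : Type*} [CommSemiring R]

noncomputable def mderivList (k : σ → ℕ) (L : List σ) (P : MvPolynomial σ R) :
    MvPolynomial σ R :=
  (L.map fun j => (MvPolynomial.pderiv j)^[k j]).foldr (· ∘ ·) id P

theorem mderiv_eq_mderivList {m : ℕ} (k : Fin m → ℕ) (P : MvPolynomial (Fin m) ℝ) :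
    mderiv k P = mderivList k (List.finRange m) P := by
  rw [mderiv, List.ofFn_eq_map]
  rfl

theorem degreeOf_mderivList_le (i : σ) (k : σ → ℕ) (L : List σ) (P : MvPolynomial σ R) :
    (mderivList k L P).degreeOf i ≤ P.degreeOf i := by
  induction L with
  | nil => rfl
  | cons j L ih => exact (MvPolynomial.degreeOf_iterate_pderiv_le i j (k j) _).trans ih

open Polynomial.Chebyshev in
theorem abs_eval_mderivList_le [DecidableEq σ] {n : ℕ} {P : MvPolynomial σ ℝ}
    (hdeg : ∀ j, P.degreeOf j ≤ n) {lam M : ℝ} (hlam : 0 < lam)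
    (hP : ∀ y : σ → ℝ, (∀ j, |y j| ≤ lam) → |MvPolynomial.eval y P| ≤ M) (k : σ → ℕ)
    {L : List σ} (hL : L.Nodup) {x : σ → ℝ} (hxL : ∀ j ∈ L, lam ≤ |x j|)
    (hx : ∀ j ∉ L, |x j| ≤ lam) :
    |MvPolynomial.eval x (mderivList k L P)| ≤
      (L.map fun j => (lam ^ k j)⁻¹ * |(derivative^[k j] (T ℝ n)).eval (x j / lam)|).prod *
        M := by
  induction L generalizing x with
  | nil => simpa [mderivList] using hP x fun j => hx j List.not_mem_nil
  | cons j L ih =>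
    obtain ⟨hjL, hL⟩ := List.nodup_cons.mp hL
    have hslice (s : ℝ) (hs : |s| ≤ lam) :
        |(MvPolynomial.slice j x (mderivList k L P)).eval s| ≤
          (L.map fun i => (lam ^ k i)⁻¹ *
            |(derivative^[k i] (T ℝ n)).eval (x i / lam)|).prod * M := by
      have hne (i) (hi : i ∈ L) : i ≠ j := fun h => hjL (h ▸ hi)
      rw [MvPolynomial.eval_slice]
      convert ih hL (x := Function.update x j s) (fun i hi => ?_) (fun i hi => ?_) using 3
      · exact List.map_congr_left fun i hi => by rw [Function.update_of_ne (hne i hi)]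
      · rw [Function.update_of_ne (hne i hi)]
        exact hxL i (List.mem_cons_of_mem j hi)
      · rcases eq_or_ne i j with rfl | hij
        · rwa [Function.update_self]
        · rw [Function.update_of_ne hij]
          exact hx i (by simp [hij, hi])
    rw [mderivList, List.map_cons, List.foldr_cons, Function.comp_apply, ← mderivList,
      MvPolynomial.eval_iterate_pderiv, List.map_cons, List.prod_cons, mul_assoc]
    exact abs_eval_iterate_derivative_le_of_forall_abs_le_of_le_abs
      ((MvPolynomial.natDegree_slice_le j x _).trans
        ((degreeOf_mderivList_le j k L P).trans (hdeg j))) hlam hslice (hxL j List.mem_cons_self)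

end MixedDerivative

/-- Chebyshev-type bound for mixed partial derivatives of a real polynomial of
degree at most `n` in each variable, outside the cube `[−λ, λ]^m`. -/
theorem mixed_derivative_chebyshev_bound {m : ℕ} (n : ℕ)
    (P : MvPolynomial (Fin m) ℝ) (hdeg : ∀ j : Fin m, P.degreeOf j ≤ n)
    (lam : ℝ) (hlam : 0 < lam) (k : Fin m → ℕ)
    (x : Fin m → ℝ) (hx : ∀ j, lam < |x j|) :
    |MvPolynomial.eval x (mderiv k P)| ≤
      lam ^ (-(∑ j, k j : ℤ)) *
        (∏ j : Fin m, |(Polynomial.derivative^[k j] (Chebyshev.T ℝ n)).eval (x j / lam)|) *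
        sSup {r : ℝ | ∃ y : Fin m → ℝ, (∀ j, |y j| ≤ lam) ∧
          r = |MvPolynomial.eval y P|} := by
  set S := {r : ℝ | ∃ y : Fin m → ℝ, (∀ j, |y j| ≤ lam) ∧ r = |MvPolynomial.eval y P|}
  have hS : BddAbove S := by
    refine ((isCompact_univ_pi fun _ => isCompact_Icc (a := -lam) (b := lam)).image
      (MvPolynomial.continuous_eval P).abs).bddAbove.mono ?_
    rintro r ⟨y, hy, rfl⟩
    exact ⟨y, fun j _ => abs_le.mp (hy j), rfl⟩
  have hscale : ∏ j, (lam ^ k j)⁻¹ = lam ^ (-(∑ j, k j : ℤ)) := by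
    rw [Finset.prod_inv_distrib, Finset.prod_pow_eq_pow_sum, zpow_neg, ← Nat.cast_sum,
      zpow_natCast]
  rw [mderiv_eq_mderivList, ← hscale, ← Finset.prod_mul_distrib, Fin.prod_univ_def]
  exact abs_eval_mderivList_le hdeg hlam (fun y hy => le_csSup hS ⟨y, hy, rfl⟩) k
    (List.nodup_finRange m) (fun j _ => (hx j).le) fun j hj => absurd (List.mem_finRange j) hj
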